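/- arXiv:1908.10066 — 3 statements merged into one kernel-verified Lean document; each statement's English description precedes it below -/
import Mathlib

section
/- For every edge set E₀ ⊆ P(ω), one has P({E = E₀} ∩ A) = α_1^{|C_∞(E₀)∖B|} · (∏_{C a finite cluster of (ω,E₀)} Σ_{i=1}^q α_i^{|C|}) · ∏_{e ∈ E₀} p_e · ∏_{e ∈ P(ω)∖E₀} (1 − p_e). Consequently, if P(A) > 0, the conditional law of the edge set E given A is proportional to α_1^{|C_∞(E)|} · ∏_{C a finite cluster of (ω,E)} (Σ_{i=1}^q α_i^{|C|}) · ∏_{e ∈ E} p_e · ∏_{e ∈ P(ω)∖E} (1 − p_e), i.e. it is the generalized random cluster measure. -/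
open Finset
open scoped Classical

noncomputable section

namespace ContinuumPotts

/-- Points of `ℝ^d`. -/
abbrev Pt (d : ℕ) := EuclideanSpace ℝ (Fin d)

variable {d : ℕ}

/-- The vertex type attached to a finite point configuration `ω`. -/
abbrev V (ω : Finset (Pt d)) := {x : Pt d // x ∈ ω}

/-- `P(ω)`: the set of unordered pairs of distinct points of `ω`, encoded as two-element
subsets of `ω`. -/
def pairs (ω : Finset (Pt d)) : Finset (Finset (V ω)) :=
  Finset.univ.powerset.filter fun e => e.card = 2

/-- The value `φ(x−y)` attached to a pair `e = {x,y}` (for even `φ`); computed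
symmetrically so that no symmetry proof is needed in the definition. -/
def phiPair (φ : Pt d → ℝ) (ω : Finset (Pt d)) (e : Finset (V ω)) : ℝ :=
  (∑ p ∈ e.offDiag, φ (p.1.1 - p.2.1)) / 2

/-- The probability `p_e = 1 − exp(−φ(x−y))` that the pair `e = {x,y}` is an edge. -/
def pe (φ : Pt d → ℝ) (ω : Finset (Pt d)) (e : Finset (V ω)) : ℝ :=
  1 - Real.exp (-(phiPair φ ω e))

/-- The probability that the random edge set is exactly `E`: each pair `e ∈ P(ω)` is present
independently with probability `p_e`. -/
def edgeWeight (φ : Pt d → ℝ) (ω : Finset (Pt d)) (E : Finset (Finset (V ω))) : ℝ :=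
  (∏ e ∈ E, pe φ ω e) * ∏ e ∈ pairs ω \ E, (1 - pe φ ω e)

/-- The probability that the random colouring is exactly `s`: points of the boundary set `B`
get the deterministic colour `1` (here `0 : Fin q`), the other points get i.i.d. colours of
law `α`. -/
def colourWeight {q : ℕ} (α : Fin q → ℝ) (c₁ : Fin q) (ω B : Finset (Pt d))
    (s : V ω → Fin q) : ℝ :=
  if ∀ x : V ω, x.1 ∈ B → s x = c₁ then
    ∏ x ∈ Finset.univ.filter fun x : V ω => x.1 ∉ B, α (s x)
  else 0

/-- The event `A`: every pair of points forming an edge of `E` has matching colours. -/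
def Compat {q : ℕ} {ω : Finset (Pt d)} (s : V ω → Fin q) (E : Finset (Finset (V ω))) : Prop :=
  ∀ e ∈ E, ∀ x ∈ e, ∀ y ∈ e, s x = s y

/-- The Hamiltonian `H^φ(s) = Σ_{{x,y} ⊆ ω, s(x) ≠ s(y)} φ(x−y)`. -/
def Hphi {q : ℕ} (φ : Pt d → ℝ) (ω : Finset (Pt d)) (s : V ω → Fin q) : ℝ :=
  ∑ e ∈ (pairs ω).filter fun e => ¬ ∀ x ∈ e, ∀ y ∈ e, s x = s y, phiPair φ ω e

/-- Two vertices are adjacent in the edge set `E` if they are distinct and the pair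
`{x,y}` belongs to `E`. -/
def Adj {ω : Finset (Pt d)} (E : Finset (Finset (V ω))) (x y : V ω) : Prop :=
  x ≠ y ∧ ({x, y} : Finset (V ω)) ∈ E

/-- The cluster (connected component of the graph `(ω, E)`) containing `x`. -/
def clusterOf {ω : Finset (Pt d)} (E : Finset (Finset (V ω))) (x : V ω) : Finset (V ω) :=
  Finset.univ.filter fun y => Relation.ReflTransGen (Adj E) x y

/-- `C_∞(E)`: the union of all clusters of `(ω, E)` intersecting the boundary set `B`. -/
def infCluster (B : Finset (Pt d)) {ω : Finset (Pt d)} (E : Finset (Finset (V ω))) :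
    Finset (V ω) :=
  Finset.univ.filter fun x => ∃ y : V ω, y.1 ∈ B ∧ Relation.ReflTransGen (Adj E) x y

/-- The finite clusters of `(ω, E)`: those connected components not intersecting `B`. -/
def finiteClusters (B : Finset (Pt d)) {ω : Finset (Pt d)} (E : Finset (Finset (V ω))) :
    Finset (Finset (V ω)) :=
  (Finset.univ.image (clusterOf E)).filter fun C => ∀ x ∈ C, x.1 ∉ B

/-- The generalized random-cluster weight
`w(E) = α₁^{|C_∞(E)|} · ∏_{C finite cluster} (Σᵢ αᵢ^{|C|}) · ∏_{e ∈ E} p_e ·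
∏_{e ∈ P(ω)∖E} (1 − p_e)`. -/
def rcWeight {q : ℕ} (φ : Pt d → ℝ) (α : Fin q → ℝ) (c₁ : Fin q) (ω B : Finset (Pt d))
    (E : Finset (Finset (V ω))) : ℝ :=
  α c₁ ^ (infCluster B E).card * (∏ C ∈ finiteClusters B E, ∑ i, α i ^ C.card) *
    edgeWeight φ ω E

end ContinuumPotts

namespace ContinuumPotts

section Aux

variable {d : ℕ} {ω : Finset (Pt d)}

lemma adj_symm (E : Finset (Finset (V ω))) : Symmetric (Adj E) := fun _ _ h =>
  ⟨h.1.symm, by rw [Finset.pair_comm]; exact h.2⟩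

/-- The setoid whose classes are the clusters of `(ω, E)`. -/
def cSetoid (E : Finset (Finset (V ω))) : Setoid (V ω) where
  r x y := Relation.ReflTransGen (Adj E) x y
  iseqv := ⟨fun _ => Relation.ReflTransGen.refl,
    fun h => (show Std.Symm (Relation.ReflTransGen (Adj E)) from haveI : Std.Symm (Adj E) := ⟨fun a b h => adj_symm E h⟩; inferInstance).symm _ _ h,
    fun h h' => Relation.ReflTransGen.trans h h'⟩

lemma cSetoid_mk_eq (E : Finset (Finset (V ω))) {x y : V ω} :
    Quotient.mk (cSetoid E) x = Quotient.mk (cSetoid E) y ↔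
      Relation.ReflTransGen (Adj E) x y := by
  rw [Quotient.eq]
  exact Iff.rfl

lemma compat_iff {q : ℕ} (E : Finset (Finset (V ω))) (hE : E ⊆ pairs ω) (s : V ω → Fin q) :
    Compat s E ↔ ∀ x y : V ω, Relation.ReflTransGen (Adj E) x y → s x = s y := by
  constructor
  · intro hc x y h
    induction h with
    | refl => rfl
    | tail _ h2 ih =>
        exact ih.trans (hc _ h2.2 _ (Finset.mem_insert_self _ _) _
          (Finset.mem_insert_of_mem (Finset.mem_singleton_self _)))
  · intro h e he x hx y hy
    by_cases hxy : x = y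
    · rw [hxy]
    · have hcard : e.card = 2 := (Finset.mem_filter.mp (hE he)).2
      have hsub : ({x, y} : Finset (V ω)) ⊆ e := by
        intro z hz
        rcases Finset.mem_insert.mp hz with h'|h'
        · rwa [h']
        · rw [Finset.mem_singleton.mp h']; exact hy
      have heq : ({x, y} : Finset (V ω)) = e := by
        apply Finset.eq_of_subset_of_card_le hsub
        rw [hcard, Finset.card_insert_of_notMem (by simpa using hxy),
          Finset.card_singleton]
      exact h x y (Relation.ReflTransGen.single ⟨hxy, by rwa [heq]⟩)

lemma mem_clusterOf_iff (E : Finset (Finset (V ω))) (x y : V ω) :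
    y ∈ clusterOf E x ↔ Quotient.mk (cSetoid E) y = Quotient.mk (cSetoid E) x := by
  rw [cSetoid_mk_eq]
  simp only [clusterOf, Finset.mem_filter, Finset.mem_univ, true_and]
  exact ⟨fun h => ((show Std.Symm (Relation.ReflTransGen (Adj E)) from haveI : Std.Symm (Adj E) := ⟨fun a b h => adj_symm E h⟩; inferInstance).symm _ _) h,
    fun h => ((show Std.Symm (Relation.ReflTransGen (Adj E)) from haveI : Std.Symm (Adj E) := ⟨fun a b h => adj_symm E h⟩; inferInstance).symm _ _) h⟩

/-- A cluster class "touches" the boundary `B`. -/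
def touchB (B : Finset (Pt d)) (E : Finset (Finset (V ω))) (q' : Quotient (cSetoid E)) : Prop :=
  ∃ x : V ω, x.1 ∈ B ∧ Quotient.mk (cSetoid E) x = q'

/-- The number of non-boundary points in a cluster class. -/
def nOut (B : Finset (Pt d)) (E : Finset (Finset (V ω))) (q' : Quotient (cSetoid E)) : ℕ :=
  (Finset.univ.filter fun x : V ω => x.1 ∉ B ∧ Quotient.mk (cSetoid E) x = q').card

/-- The per-class colour weight. -/
def Fw {q : ℕ} (α : Fin q → ℝ) (c₁ : Fin q) (B : Finset (Pt d)) (E : Finset (Finset (V ω)))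
    (q' : Quotient (cSetoid E)) (i : Fin q) : ℝ :=
  if touchB B E q' ∧ i ≠ c₁ then 0 else α i ^ nOut B E q'

lemma sum_reindex {q : ℕ} (α : Fin q → ℝ) (c₁ : Fin q) (B : Finset (Pt d))
    (E₀ : Finset (Finset (V ω))) (hE₀ : E₀ ⊆ pairs ω) :
    (∑ s : V ω → Fin q, if Compat s E₀ then colourWeight α c₁ ω B s else 0)
      = ∑ g : Quotient (cSetoid E₀) → Fin q,
          colourWeight α c₁ ω B (fun x => g (Quotient.mk (cSetoid E₀) x)) := by
  classical
  rw [← Finset.sum_filter]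
  refine Finset.sum_nbij' (i := fun s => fun q' => s q'.out)
    (j := fun g => fun x => g (Quotient.mk (cSetoid E₀) x)) ?_ ?_ ?_ ?_ ?_
  · intro s _; exact Finset.mem_univ _
  · intro g _
    refine Finset.mem_filter.mpr ⟨Finset.mem_univ _, ?_⟩
    rw [compat_iff E₀ hE₀]
    intro x y h
    exact congrArg g ((cSetoid_mk_eq E₀).mpr h)
  · intro s hs
    funext x
    exact (compat_iff E₀ hE₀ s).mp (Finset.mem_filter.mp hs).2 _ _
      ((cSetoid_mk_eq E₀).mp (Quotient.out_eq _))
  · intro g _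
    funext q'
    exact congrArg g (Quotient.out_eq q')
  · intro s hs
    have : (fun x => s (Quotient.mk (cSetoid E₀) x).out) = s := by
      funext x
      exact (compat_iff E₀ hE₀ s).mp (Finset.mem_filter.mp hs).2 _ _
        ((cSetoid_mk_eq E₀).mp (Quotient.out_eq _))
    rw [this]

lemma cw_eq_prodF {q : ℕ} (α : Fin q → ℝ) (c₁ : Fin q) (B : Finset (Pt d))
    (E₀ : Finset (Finset (V ω))) (g : Quotient (cSetoid E₀) → Fin q) :
    colourWeight α c₁ ω B (fun x => g (Quotient.mk (cSetoid E₀) x))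
      = ∏ q' : Quotient (cSetoid E₀), Fw α c₁ B E₀ q' (g q') := by
  classical
  unfold colourWeight
  by_cases hg : ∀ x : V ω, x.1 ∈ B → g (Quotient.mk (cSetoid E₀) x) = c₁
  · rw [if_pos hg]
    rw [← Finset.prod_fiberwise_of_maps_to
        (g := Quotient.mk (cSetoid E₀)) (t := (Finset.univ : Finset (Quotient (cSetoid E₀))))
        (fun x _ => Finset.mem_univ _)
        (fun x : V ω => α (g (Quotient.mk (cSetoid E₀) x)))]
    refine Finset.prod_congr rfl fun q' _ => ?_
    have h1 : ∀ x ∈ (Finset.univ.filter fun x : V ω => x.1 ∉ B).filter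
        (fun x => Quotient.mk (cSetoid E₀) x = q'), α (g (Quotient.mk (cSetoid E₀) x)) = α (g q') := by
      intro x hx
      rw [(Finset.mem_filter.mp hx).2]
    rw [Finset.prod_congr rfl h1, Finset.prod_const, Finset.filter_filter]
    have hne : ¬ (touchB B E₀ q' ∧ g q' ≠ c₁) := by
      rintro ⟨⟨x, hxB, hxq⟩, hne⟩
      exact hne (hxq ▸ hg x hxB)
    rw [Fw, if_neg hne, nOut]
  · rw [if_neg hg]
    push_neg at hg
    obtain ⟨x, hxB, hxc⟩ := hg
    symm
    refine Finset.prod_eq_zero (Finset.mem_univ (Quotient.mk (cSetoid E₀) x)) ?_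
    rw [Fw, if_pos ⟨⟨x, hxB, rfl⟩, hxc⟩]

lemma sumF {q : ℕ} (α : Fin q → ℝ) (c₁ : Fin q) (B : Finset (Pt d))
    (E₀ : Finset (Finset (V ω))) (q' : Quotient (cSetoid E₀)) :
    (∑ i, Fw α c₁ B E₀ q' i)
      = if touchB B E₀ q' then α c₁ ^ nOut B E₀ q' else ∑ i, α i ^ nOut B E₀ q' := by
  classical
  by_cases ht : touchB B E₀ q'
  · rw [if_pos ht]
    have : ∀ i : Fin q, Fw α c₁ B E₀ q' i = if i = c₁ then α i ^ nOut B E₀ q' else 0 := by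
      intro i
      rw [Fw]
      by_cases hi : i = c₁
      · simp [hi]
      · simp [hi, ht]
    rw [Finset.sum_congr rfl fun i _ => this i, Finset.sum_ite_eq' Finset.univ c₁]
    simp
  · rw [if_neg ht]
    refine Finset.sum_congr rfl fun i _ => ?_
    rw [Fw, if_neg (fun h => ht h.1)]

lemma card_touch {q : ℕ} (α : Fin q → ℝ) (B : Finset (Pt d))
    (E₀ : Finset (Finset (V ω))) :
    ((infCluster B E₀).filter fun x : V ω => x.1 ∉ B).card
      = ∑ q' ∈ Finset.univ.filter (touchB B E₀), nOut B E₀ q' := by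
  classical
  have hset : (infCluster B E₀).filter (fun x : V ω => x.1 ∉ B)
      = Finset.univ.filter fun x : V ω => x.1 ∉ B ∧ touchB B E₀ (Quotient.mk (cSetoid E₀) x) := by
    ext x
    simp only [infCluster, Finset.mem_filter, Finset.mem_univ, true_and]
    simp only [touchB]
    constructor
    · rintro ⟨⟨y, hyB, hR⟩, hxB⟩
      exact ⟨hxB, y, hyB, (cSetoid_mk_eq E₀).mpr
        (((show Std.Symm (Relation.ReflTransGen (Adj E₀)) from haveI : Std.Symm (Adj E₀) := ⟨fun a b h => adj_symm E₀ h⟩; inferInstance).symm _ _) hR)⟩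
    · rintro ⟨hxB, y, hyB, hmk⟩
      exact ⟨⟨y, hyB, ((show Std.Symm (Relation.ReflTransGen (Adj E₀)) from haveI : Std.Symm (Adj E₀) := ⟨fun a b h => adj_symm E₀ h⟩; inferInstance).symm _ _)
        ((cSetoid_mk_eq E₀).mp hmk)⟩, hxB⟩
  rw [hset]
  rw [Finset.card_eq_sum_card_fiberwise
    (f := Quotient.mk (cSetoid E₀)) (t := Finset.univ.filter (touchB B E₀))
    (fun x hx => Finset.mem_filter.mpr ⟨Finset.mem_univ _, (Finset.mem_filter.mp hx).2.2⟩)]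
  refine Finset.sum_congr rfl fun q' hq' => ?_
  rw [nOut]
  congr 1
  ext x
  simp only [Finset.mem_filter, Finset.mem_univ, true_and]
  constructor
  · rintro ⟨⟨h1, _⟩, h3⟩; exact ⟨h1, h3⟩
  · rintro ⟨h1, h3⟩
    exact ⟨⟨h1, h3 ▸ (Finset.mem_filter.mp hq').2⟩, h3⟩

lemma prod_fin {q : ℕ} (α : Fin q → ℝ) (B : Finset (Pt d))
    (E₀ : Finset (Finset (V ω))) :
    (∏ q' ∈ Finset.univ.filter (fun q' => ¬ touchB B E₀ q'), ∑ i, α i ^ nOut B E₀ q')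
      = ∏ C ∈ finiteClusters B E₀, ∑ i, α i ^ C.card := by
  classical
  have hfib : ∀ q' : Quotient (cSetoid E₀),
      (Finset.univ.filter fun x : V ω => Quotient.mk (cSetoid E₀) x = q')
        = clusterOf E₀ q'.out := by
    intro q'
    ext y
    rw [mem_clusterOf_iff, Finset.mem_filter]
    simp only [Finset.mem_univ, true_and]
    rw [Quotient.out_eq]
  refine Finset.prod_bij
    (i := fun q' _ => Finset.univ.filter fun x : V ω => Quotient.mk (cSetoid E₀) x = q')
    ?_ ?_ ?_ ?_
  · intro q' hq'
    have hnt := (Finset.mem_filter.mp hq').2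
    refine Finset.mem_filter.mpr ⟨?_, ?_⟩
    · rw [hfib q']
      exact Finset.mem_image_of_mem _ (Finset.mem_univ _)
    · intro x hx hxB
      exact hnt ⟨x, hxB, (Finset.mem_filter.mp hx).2⟩
  · intro q1 h1 q2 h2 heq
    have : q1.out ∈ Finset.univ.filter fun x : V ω => Quotient.mk (cSetoid E₀) x = q1 :=
      Finset.mem_filter.mpr ⟨Finset.mem_univ _, Quotient.out_eq _⟩
    rw [heq] at this
    rw [← (Finset.mem_filter.mp this).2, Quotient.out_eq]
  · intro C hC
    obtain ⟨hCim, hCB⟩ := Finset.mem_filter.mp hC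
    obtain ⟨x, _, hx⟩ := Finset.mem_image.mp hCim
    have hCeq : (Finset.univ.filter fun y : V ω =>
        Quotient.mk (cSetoid E₀) y = Quotient.mk (cSetoid E₀) x) = C := by
      rw [← hx]
      ext y
      rw [mem_clusterOf_iff, Finset.mem_filter]
      simp only [Finset.mem_univ, true_and]
    refine ⟨Quotient.mk (cSetoid E₀) x, Finset.mem_filter.mpr ⟨Finset.mem_univ _, ?_⟩, hCeq⟩
    rintro ⟨y, hyB, hmk⟩
    refine hCB y ?_ hyB
    rw [← hCeq]
    exact Finset.mem_filter.mpr ⟨Finset.mem_univ _, hmk⟩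
  · intro q' hq'
    have hnt := (Finset.mem_filter.mp hq').2
    congr 1
    funext i
    congr 1
    rw [nOut]
    congr 1
    ext x
    simp only [Finset.mem_filter, Finset.mem_univ, true_and]
    exact ⟨fun h => h.2, fun h => ⟨fun hxB => hnt ⟨x, hxB, h⟩, h⟩⟩

lemma colour_sum {q : ℕ} (α : Fin q → ℝ) (c₁ : Fin q) (B : Finset (Pt d))
    (E₀ : Finset (Finset (V ω))) (hE₀ : E₀ ⊆ pairs ω) :
    (∑ s : V ω → Fin q, if Compat s E₀ then colourWeight α c₁ ω B s else 0)
      = α c₁ ^ ((infCluster B E₀).filter fun x : V ω => x.1 ∉ B).card *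
          ∏ C ∈ finiteClusters B E₀, ∑ i, α i ^ C.card := by
  classical
  rw [sum_reindex α c₁ B E₀ hE₀]
  have h1 : ∀ g : Quotient (cSetoid E₀) → Fin q,
      colourWeight α c₁ ω B (fun x => g (Quotient.mk (cSetoid E₀) x))
        = ∏ q' : Quotient (cSetoid E₀), Fw α c₁ B E₀ q' (g q') := cw_eq_prodF α c₁ B E₀
  rw [Finset.sum_congr rfl fun g _ => h1 g]
  rw [← Fintype.piFinset_univ, ← Finset.prod_univ_sum]
  rw [Finset.prod_congr rfl fun q' _ => sumF α c₁ B E₀ q']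
  rw [Finset.prod_ite]
  congr 1
  · rw [Finset.prod_pow_eq_pow_sum, card_touch α B E₀]
  · exact prod_fin α B E₀

end Aux

/-- In the coupled colouring/edge model, for every edge set `E₀ ⊆ P(ω)`,
`P({E = E₀} ∩ A) = α₁^{|C_∞(E₀)∖B|} · (∏_{C finite cluster of (ω,E₀)} Σᵢ αᵢ^{|C|}) ·
∏_{e ∈ E₀} p_e · ∏_{e ∈ P(ω)∖E₀} (1 − p_e)`. Consequently, if `P(A) > 0`, the conditional
law of the edge set given `A` is proportional to
`α₁^{|C_∞(E)|} · ∏_{C finite cluster} (Σᵢ αᵢ^{|C|}) · ∏_{e ∈ E} p_e · ∏_{e ∉ E} (1 − p_e)`,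
i.e. it is the generalized random cluster measure. -/
theorem edges_given_A_is_grcm (d q : ℕ) (hd : 1 ≤ d) (hq : 2 ≤ q)
    (ω B : Finset (Pt d)) (hB : B ⊆ ω) (φ : Pt d → ℝ)
    (hφeven : ∀ z, φ (-z) = φ z) (hφpos : ∀ z, 0 ≤ φ z)
    (α : Fin q → ℝ) (hαpos : ∀ i, 0 < α i) (hαsum : ∑ i, α i = 1) :
    (∀ E₀ ∈ (pairs ω).powerset,
      (∑ s : V ω → Fin q, ∑ E ∈ (pairs ω).powerset,
          if E = E₀ ∧ Compat s E then
            colourWeight α (⟨0, by omega⟩ : Fin q) ω B s * edgeWeight φ ω E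
          else 0)
        = α (⟨0, by omega⟩ : Fin q) ^ ((infCluster B E₀).filter fun x : V ω => x.1 ∉ B).card *
            (∏ C ∈ finiteClusters B E₀, ∑ i, α i ^ C.card) * edgeWeight φ ω E₀)
    ∧
    ((0 < ∑ s : V ω → Fin q, ∑ E ∈ (pairs ω).powerset,
          if Compat s E then
            colourWeight α (⟨0, by omega⟩ : Fin q) ω B s * edgeWeight φ ω E
          else 0) →
      ∃ Z : ℝ, 0 < Z ∧ ∀ E₀ ∈ (pairs ω).powerset,
        (∑ s : V ω → Fin q, ∑ E ∈ (pairs ω).powerset,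
            if E = E₀ ∧ Compat s E then
              colourWeight α (⟨0, by omega⟩ : Fin q) ω B s * edgeWeight φ ω E
            else 0) /
          (∑ s : V ω → Fin q, ∑ E ∈ (pairs ω).powerset,
            if Compat s E then
              colourWeight α (⟨0, by omega⟩ : Fin q) ω B s * edgeWeight φ ω E
            else 0)
          = Z⁻¹ * rcWeight φ α (⟨0, by omega⟩ : Fin q) ω B E₀) := by
  classical
  have key : ∀ (c₁ : Fin q), ∀ E₀ ∈ (pairs ω).powerset,
      (∑ s : V ω → Fin q, ∑ E ∈ (pairs ω).powerset,
          if E = E₀ ∧ Compat s E then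
            colourWeight α c₁ ω B s * edgeWeight φ ω E
          else 0)
        = α c₁ ^ ((infCluster B E₀).filter fun x : V ω => x.1 ∉ B).card *
            (∏ C ∈ finiteClusters B E₀, ∑ i, α i ^ C.card) * edgeWeight φ ω E₀ := by
    intro c₁ E₀ hE₀mem
    have hE₀ : E₀ ⊆ pairs ω := Finset.mem_powerset.mp hE₀mem
    have stepA : ∀ s : V ω → Fin q,
        (∑ E ∈ (pairs ω).powerset,
            if E = E₀ ∧ Compat s E then colourWeight α c₁ ω B s * edgeWeight φ ω E else 0)
          = (if Compat s E₀ then colourWeight α c₁ ω B s else 0) * edgeWeight φ ω E₀ := by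
      intro s
      rw [Finset.sum_eq_single E₀]
      · by_cases h : Compat s E₀ <;> simp [h]
      · intro E _ hne
        simp [hne]
      · intro h; exact absurd hE₀mem h
    rw [Finset.sum_congr rfl fun s _ => stepA s, ← Finset.sum_mul,
      colour_sum α c₁ B E₀ hE₀]
  have hBfilter : ∀ E₀ : Finset (Finset (V ω)),
      (infCluster B E₀).filter (fun x : V ω => ¬ x.1 ∉ B)
        = Finset.univ.filter (fun x : V ω => x.1 ∈ B) := by
    intro E₀
    ext x
    simp only [Finset.mem_filter, Finset.mem_univ, true_and, not_not]
    refine ⟨fun h => h.2, fun h => ⟨?_, h⟩⟩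
    exact Finset.mem_filter.mpr ⟨Finset.mem_univ _, ⟨x, h, Relation.ReflTransGen.refl⟩⟩
  have hBcard : (Finset.univ.filter fun x : V ω => x.1 ∈ B).card = B.card := by
    refine Finset.card_bij (fun x _ => x.1) ?_ ?_ ?_
    · intro x hx
      exact (Finset.mem_filter.mp hx).2
    · intro x hx y hy h
      exact Subtype.ext h
    · intro b hb
      exact ⟨⟨b, hB hb⟩, Finset.mem_filter.mpr ⟨Finset.mem_univ _, hb⟩, rfl⟩
  have hcardsplit : ∀ E₀ : Finset (Finset (V ω)),
      (infCluster B E₀).card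
        = B.card + ((infCluster B E₀).filter fun x : V ω => x.1 ∉ B).card := by
    intro E₀
    rw [← Finset.card_filter_add_card_filter_not
      (s := infCluster B E₀) (p := fun x : V ω => x.1 ∉ B), add_comm]
    congr 1
    rw [hBfilter E₀, hBcard]
  refine ⟨key _, ?_⟩
  intro hPA
  set c₁ : Fin q := (⟨0, by omega⟩ : Fin q) with hc₁
  refine ⟨α c₁ ^ B.card *
    (∑ s : V ω → Fin q, ∑ E ∈ (pairs ω).powerset,
        if Compat s E then colourWeight α c₁ ω B s * edgeWeight φ ω E else 0),
    mul_pos (pow_pos (hαpos c₁) _) hPA, ?_⟩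
  intro E₀ hE₀mem
  rw [key c₁ E₀ hE₀mem]
  rw [rcWeight, hcardsplit E₀, pow_add]
  have hPAne : (∑ s : V ω → Fin q, ∑ E ∈ (pairs ω).powerset,
      if Compat s E then colourWeight α c₁ ω B s * edgeWeight φ ω E else 0) ≠ 0 :=
    ne_of_gt hPA
  have hαne : α c₁ ^ B.card ≠ 0 := ne_of_gt (pow_pos (hαpos c₁) _)
  field_simp

end ContinuumPotts
end
end

section
/- Assume moreover that there exist u > 0 and r₃ > 0 such that φ(z) ≥ u whenever ‖z‖ ≤ r₃, and that α_1 ≥ α_i for all i. Set p̃ = (1 − e^{−u})/(q²e^{−u} + 1 − e^{−u}), and let μ̄_ω be the probability measure on subsets of P(ω) under which each pair {x,y} ∈ P(ω) with ‖x−y‖ ≤ r₃ is included independently with probability p̃, and no pair with ‖x−y‖ > r₃ is included. Then the generalized random cluster measure μ^α_ω stochastically dominates μ̄_ω: for every function f from subsets of P(ω) to ℝ that is nondecreasing with respect to set inclusion, Σ_E f(E) μ^α_ω(E) ≥ Σ_E f(E) μ̄_ω(E). -/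
/-!
By Holley's inequality it suffices to check a local condition: opening a single pair `e` at
distance at most `r₃` multiplies the random-cluster weight by at least the odds
`p̃ / (1 - p̃) = (1 - e^{-u}) / (q² e^{-u})`. The edge factor gains
`p_e / (1 - p_e) ≥ (1 - e^{-u}) / e^{-u}` because `φ ≥ u` there. The cluster factor is a product
over clusters `C` of `α₁^{|C|}` (clusters meeting `B`) or `Σᵢ αᵢ^{|C|}` (finite clusters); each
factor lies between `α₁^{|C|}` and `q α₁^{|C|}`, and opening an edge merges at most two clusters,
so this factor drops by at most `q²`.
-/

open Finset
open scoped Classical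

noncomputable section

namespace ContinuumPotts

/-- The distance `‖x−y‖` between the two points of a pair `e = {x,y}`, computed symmetrically. -/
def pairDist {d : ℕ} {ω : Finset (Pt d)} (e : Finset (V ω)) : ℝ :=
  (∑ p ∈ e.offDiag, dist p.1.1 p.2.1) / 2

/-- The probability that the independent edge set of the comparison model is exactly `E`:
each pair at distance at most `r₃` is present independently with probability `p̃`, and no
other pair is present. -/
def barWeight {d : ℕ} (ω : Finset (Pt d)) (r₃ ptil : ℝ) (E : Finset (Finset (V ω))) : ℝ :=
  (∏ e ∈ E, if pairDist e ≤ r₃ then ptil else 0) *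
    ∏ e ∈ pairs ω \ E, (1 - if pairDist e ≤ r₃ then ptil else 0)

section Bernoulli

variable {β : Type*} [DecidableEq β]

def bernoulliWeight (P : Finset β) (p : β → ℝ) (E : Finset β) : ℝ :=
  (∏ e ∈ E, p e) * ∏ e ∈ P \ E, (1 - p e)

lemma sum_bernoulliWeight (P : Finset β) (p : β → ℝ) :
    ∑ E ∈ P.powerset, bernoulliWeight P p E = 1 := by
  simpa [bernoulliWeight] using (prod_add p (fun e => 1 - p e) P).symm

variable {P : Finset β} {p : β → ℝ}

lemma bernoulliWeight_nonneg (hp0 : ∀ e ∈ P, 0 ≤ p e) (hp1 : ∀ e ∈ P, p e ≤ 1)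
    {E : Finset β} (hE : E ⊆ P) : 0 ≤ bernoulliWeight P p E :=
  mul_nonneg (prod_nonneg fun e he => hp0 e (hE he))
    (prod_nonneg fun e he => sub_nonneg.2 (hp1 e (mem_sdiff.1 he).1))

lemma bernoulliWeight_insert_mul {E : Finset β} {e : β} (he : e ∈ P) (heE : e ∉ E) :
    bernoulliWeight P p (insert e E) * (1 - p e) = bernoulliWeight P p E * p e := by
  rw [bernoulliWeight, bernoulliWeight, prod_insert heE, sdiff_insert,
    ← mul_prod_erase _ _ (mem_sdiff.2 ⟨he, heE⟩)]
  ring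

lemma bernoulliWeight_mul_prod_sdiff {a c : Finset β} (ha : a ⊆ P) (hca : c ⊆ a) :
    bernoulliWeight P p a * ∏ e ∈ a \ c, (1 - p e) =
      bernoulliWeight P p c * ∏ e ∈ a \ c, p e := by
  have hp : (∏ e ∈ a \ c, p e) * ∏ e ∈ c, p e = ∏ e ∈ a, p e := prod_sdiff hca
  have hq : (∏ e ∈ a \ c, (1 - p e)) * ∏ e ∈ P \ a, (1 - p e) = ∏ e ∈ P \ c, (1 - p e) := by
    rw [← sdiff_sdiff_sdiff_cancel_left ha]
    exact prod_sdiff (sdiff_subset_sdiff le_rfl hca)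
  rw [bernoulliWeight, bernoulliWeight, ← hp, ← hq]
  ring

variable {w : Finset β → ℝ}

lemma prod_mul_le_prod_one_sub_mul_union (hp0 : ∀ e ∈ P, 0 ≤ p e) (hp1 : ∀ e ∈ P, p e ≤ 1)
    (hstep : ∀ E ⊆ P, ∀ e ∈ P, e ∉ E → p e * w E ≤ (1 - p e) * w (insert e E))
    {E S : Finset β} (hE : E ⊆ P) (hS : S ⊆ P) (hdisj : Disjoint S E) :
    (∏ e ∈ S, p e) * w E ≤ (∏ e ∈ S, (1 - p e)) * w (E ∪ S) := by
  induction S using Finset.induction_on with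
  | empty => simp
  | insert e S heS ih =>
    have he : e ∈ P := hS (mem_insert_self e S)
    have hSP : S ⊆ P := (subset_insert e S).trans hS
    have heES : e ∉ E ∪ S := by
      rw [mem_union, not_or]
      exact ⟨disjoint_left.1 hdisj (mem_insert_self e S), heS⟩
    rw [prod_insert heS, prod_insert heS, union_insert]
    calc p e * (∏ e ∈ S, p e) * w E = p e * ((∏ e ∈ S, p e) * w E) := by ring
      _ ≤ p e * ((∏ e ∈ S, (1 - p e)) * w (E ∪ S)) :=
        mul_le_mul_of_nonneg_left (ih hSP (disjoint_of_subset_left (subset_insert e S) hdisj))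
          (hp0 e he)
      _ = (∏ e ∈ S, (1 - p e)) * (p e * w (E ∪ S)) := by ring
      _ ≤ (∏ e ∈ S, (1 - p e)) * ((1 - p e) * w (insert e (E ∪ S))) :=
        mul_le_mul_of_nonneg_left (hstep _ (union_subset hE hSP) e he heES)
          (prod_nonneg fun e' he' => sub_nonneg.2 (hp1 e' (hSP he')))
      _ = (1 - p e) * (∏ e ∈ S, (1 - p e)) * w (insert e (E ∪ S)) := by ring

lemma bernoulliWeight_mul_le_inter_mul_union (hp0 : ∀ e ∈ P, 0 ≤ p e)
    (hp1 : ∀ e ∈ P, p e < 1)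
    (hstep : ∀ E ⊆ P, ∀ e ∈ P, e ∉ E → p e * w E ≤ (1 - p e) * w (insert e E))
    {a b : Finset β} (ha : a ⊆ P) (hb : b ⊆ P) :
    bernoulliWeight P p a * w b ≤ bernoulliWeight P p (a ∩ b) * w (a ∪ b) := by
  have hab : a \ b ⊆ P := sdiff_subset.trans ha
  have hpos : 0 < ∏ e ∈ a \ b, (1 - p e) :=
    prod_pos fun e he => sub_pos.2 (hp1 e (hab he))
  have hmove := bernoulliWeight_mul_prod_sdiff (p := p) ha (inter_subset_left : a ∩ b ⊆ a)
  rw [sdiff_inter_self_left] at hmove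
  have hgrow := prod_mul_le_prod_one_sub_mul_union hp0
    (fun e he => (hp1 e he).le) hstep hb hab disjoint_sdiff_self_left
  rw [union_sdiff_self_eq_union, union_comm] at hgrow
  refine le_of_mul_le_mul_right ?_ hpos
  calc bernoulliWeight P p a * w b * ∏ e ∈ a \ b, (1 - p e)
      = bernoulliWeight P p (a ∩ b) * ((∏ e ∈ a \ b, p e) * w b) := by
        rw [mul_right_comm, hmove, mul_assoc]
    _ ≤ bernoulliWeight P p (a ∩ b) * ((∏ e ∈ a \ b, (1 - p e)) * w (a ∪ b)) :=
        mul_le_mul_of_nonneg_left hgrow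
          (bernoulliWeight_nonneg hp0 (fun e he => (hp1 e he).le) (inter_subset_left.trans ha))
    _ = bernoulliWeight P p (a ∩ b) * w (a ∪ b) * ∏ e ∈ a \ b, (1 - p e) := by ring

lemma sum_mul_le_sum_mul_of_holley [Fintype β] {μ F G : Finset β → ℝ} (hμ : Monotone μ)
    (hF : ∀ a ⊆ P, 0 ≤ F a) (hG : ∀ a ⊆ P, 0 ≤ G a)
    (hFG : ∑ a ∈ P.powerset, F a = ∑ a ∈ P.powerset, G a)
    (h : ∀ a ⊆ P, ∀ b ⊆ P, F a * G b ≤ F (a ∩ b) * G (a ∪ b)) :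
    ∑ a ∈ P.powerset, μ a * F a ≤ ∑ a ∈ P.powerset, μ a * G a := by
  have hsum : ∀ v : Finset β → ℝ,
      ∑ a, (if a ⊆ P then v a else 0) = ∑ a ∈ P.powerset, v a := by
    intro v
    rw [← sum_filter]
    congr 1
    ext a
    simp
  have hext0 : ∀ v : Finset β → ℝ, (∀ a ⊆ P, 0 ≤ v a) →
      (0 : Finset β → ℝ) ≤ fun a => if a ⊆ P then v a else 0 := by
    intro v hv a
    dsimp only [Pi.zero_apply]
    split_ifs with ha
    exacts [hv a ha, le_rfl]
  have hcond : ∀ a b, (if a ⊆ P then F a else 0) * (if b ⊆ P then G b else 0) ≤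
      (if a ⊓ b ⊆ P then F (a ⊓ b) else 0) * (if a ⊔ b ⊆ P then G (a ⊔ b) else 0) := by
    intro a b
    by_cases hab : a ⊆ P ∧ b ⊆ P
    · simpa [hab, inter_subset_left.trans hab.1, union_subset hab.1 hab.2] using
        h a hab.1 b hab.2
    · rcases not_and_or.1 hab with hn | hn <;>
        simpa [hn] using mul_nonneg (hext0 F hF (a ⊓ b)) (hext0 G hG (a ⊔ b))
  have key := holley (fun a => if a ⊆ P then F a else 0) (fun a => if a ⊆ P then G a else 0)
    (fun a => μ a - μ ∅) (fun a => sub_nonneg.2 (hμ (empty_subset a))) (hext0 F hF) (hext0 G hG)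
    (fun a b hab => sub_le_sub_right (hμ hab) _) (by rw [hsum, hsum, hFG]) hcond
  simp only [mul_ite, mul_zero, hsum, sub_mul, sum_sub_distrib, ← mul_sum, hFG] at key
  linarith

/-- `hstep` says that under `w`, given the other edges, the edge `e` is open with probability at
least `p e`. -/
theorem sum_mul_bernoulliWeight_le [Fintype β] (hp0 : ∀ e ∈ P, 0 ≤ p e)
    (hp1 : ∀ e ∈ P, p e < 1) (hw : ∀ E ⊆ P, 0 ≤ w E) (hZ : 0 < ∑ E ∈ P.powerset, w E)
    (hstep : ∀ E ⊆ P, ∀ e ∈ P, e ∉ E → p e * w E ≤ (1 - p e) * w (insert e E))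
    {f : Finset β → ℝ} (hf : Monotone f) :
    ∑ E ∈ P.powerset, f E * bernoulliWeight P p E ≤
      ∑ E ∈ P.powerset, f E * (w E / ∑ E' ∈ P.powerset, w E') := by
  refine sum_mul_le_sum_mul_of_holley hf
    (fun a ha => bernoulliWeight_nonneg hp0 (fun e he => (hp1 e he).le) ha)
    (fun a ha => div_nonneg (hw a ha) hZ.le) ?_ fun a ha b hb => ?_
  · rw [sum_bernoulliWeight, ← sum_div, div_self hZ.ne']
  · rw [← mul_div_assoc, ← mul_div_assoc]
    exact div_le_div_of_nonneg_right
      (bernoulliWeight_mul_le_inter_mul_union hp0 hp1 hstep ha hb) hZ.le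

end Bernoulli

section Clusters

variable {d : ℕ} {ω : Finset (Pt d)} {E : Finset (Finset (V ω))} {a b x y z : V ω}

lemma adj_comm : Adj E a b ↔ Adj E b a := by
  simp only [Adj, ne_comm, pair_comm]

lemma reach_mono {E' : Finset (Finset (V ω))} (hE : E ⊆ E')
    (h : Relation.ReflTransGen (Adj E) a b) : Relation.ReflTransGen (Adj E') a b :=
  h.lift id fun _ _ hab => ⟨hab.1, hE hab.2⟩

lemma reach_symm (h : Relation.ReflTransGen (Adj E) a b) : Relation.ReflTransGen (Adj E) b a :=
  Relation.reflTransGen_swap.1 (h.lift id fun _ _ => adj_comm.1)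

lemma adj_insert_iff (hxy : x ≠ y) :
    Adj (insert {x, y} E) a b ↔ Adj E a b ∨ (a = x ∧ b = y) ∨ (a = y ∧ b = x) := by
  simp only [Adj, mem_insert, ← coe_inj, coe_pair, Set.pair_eq_pair_iff]
  grind

/-- A path using the new edge `{x, y}` can be shortcut to one that crosses it at most once. -/
lemma reach_insert_iff (hxy : x ≠ y) :
    Relation.ReflTransGen (Adj (insert {x, y} E)) a b ↔
      Relation.ReflTransGen (Adj E) a b ∨
        (Relation.ReflTransGen (Adj E) a x ∧ Relation.ReflTransGen (Adj E) y b) ∨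
        (Relation.ReflTransGen (Adj E) a y ∧ Relation.ReflTransGen (Adj E) x b) := by
  constructor
  · intro h
    induction h with
    | refl => exact .inl .refl
    | tail _ hbc ih =>
      rcases (adj_insert_iff hxy).1 hbc with hbc | ⟨rfl, rfl⟩ | ⟨rfl, rfl⟩ <;>
        rcases ih with h | ⟨h₁, h₂⟩ | ⟨h₁, h₂⟩
      exacts [.inl (h.tail hbc), .inr (.inl ⟨h₁, h₂.tail hbc⟩), .inr (.inr ⟨h₁, h₂.tail hbc⟩),
        .inr (.inl ⟨h, .refl⟩), .inr (.inl ⟨h₁, .refl⟩), .inl h₁,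
        .inr (.inr ⟨h, .refl⟩), .inl h₁, .inr (.inr ⟨h₁, .refl⟩)]
  · have hsub : E ⊆ insert {x, y} E := subset_insert _ _
    have hxy' : Relation.ReflTransGen (Adj (insert {x, y} E)) x y :=
      .single ⟨hxy, mem_insert_self _ _⟩
    rintro (h | ⟨h₁, h₂⟩ | ⟨h₁, h₂⟩)
    · exact reach_mono hsub h
    · exact ((reach_mono hsub h₁).trans hxy').trans (reach_mono hsub h₂)
    · exact ((reach_mono hsub h₁).trans (reach_symm hxy')).trans (reach_mono hsub h₂)

lemma mem_clusterOf : a ∈ clusterOf E z ↔ Relation.ReflTransGen (Adj E) z a := by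
  simp [clusterOf]

lemma clusterOf_eq_iff : clusterOf E a = clusterOf E b ↔ Relation.ReflTransGen (Adj E) a b := by
  refine ⟨fun h => mem_clusterOf.1 (h ▸ mem_clusterOf.2 .refl), fun h => ?_⟩
  ext c
  simp only [mem_clusterOf]
  exact ⟨(reach_symm h).trans, h.trans⟩

lemma mem_infCluster_iff {B : Finset (Pt d)} :
    x ∈ infCluster B E ↔ ¬ ∀ a ∈ clusterOf E x, a.1 ∉ B := by
  simp only [infCluster, mem_filter, mem_univ, true_and, mem_clusterOf, not_forall, not_not,
    exists_prop]
  exact ⟨fun ⟨b, hb, h⟩ => ⟨b, h, hb⟩, fun ⟨b, h, hb⟩ => ⟨b, hb, h⟩⟩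

lemma clusterOf_insert_of_reach (hxy : x ≠ y) (hr : Relation.ReflTransGen (Adj E) x y) :
    clusterOf (insert {x, y} E) = clusterOf E := by
  funext z
  ext a
  simp only [mem_clusterOf, reach_insert_iff hxy]
  exact ⟨fun h => h.elim id (Or.elim · (fun h => (h.1.trans hr).trans h.2)
    (fun h => (h.1.trans (reach_symm hr)).trans h.2)), .inl⟩

lemma clusterOf_insert_of_reach_left (hxy : x ≠ y) (hz : Relation.ReflTransGen (Adj E) z x) :
    clusterOf (insert {x, y} E) z = clusterOf E x ∪ clusterOf E y := by
  rw [← clusterOf_eq_iff.2 hz]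
  ext a
  simp only [mem_union, mem_clusterOf, reach_insert_iff hxy, hz, true_and]
  exact ⟨fun h => h.elim .inl (Or.elim · .inr fun h => .inl (hz.trans h.2)), .imp_right .inl⟩

lemma clusterOf_insert_of_not_reach (hxy : x ≠ y) (hzx : ¬ Relation.ReflTransGen (Adj E) z x)
    (hzy : ¬ Relation.ReflTransGen (Adj E) z y) :
    clusterOf (insert {x, y} E) z = clusterOf E z := by
  ext a
  simp only [mem_clusterOf, reach_insert_iff hxy, hzx, hzy, false_and, or_false]

lemma image_clusterOf_insert (hxy : x ≠ y) :
    univ.image (clusterOf (insert {x, y} E)) =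
      insert (clusterOf E x ∪ clusterOf E y)
        (univ.image (clusterOf E) \ {clusterOf E x, clusterOf E y}) := by
  ext C
  simp only [mem_image, mem_univ, true_and, mem_insert, mem_sdiff, mem_singleton, not_or]
  constructor
  · rintro ⟨z, rfl⟩
    by_cases hzx : Relation.ReflTransGen (Adj E) z x
    · exact .inl (clusterOf_insert_of_reach_left hxy hzx)
    by_cases hzy : Relation.ReflTransGen (Adj E) z y
    · rw [pair_comm, union_comm]
      exact .inl (clusterOf_insert_of_reach_left hxy.symm hzy)
    rw [clusterOf_insert_of_not_reach hxy hzx hzy, clusterOf_eq_iff, clusterOf_eq_iff]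
    exact .inr ⟨⟨z, rfl⟩, hzx, hzy⟩
  · rintro (rfl | ⟨⟨z, rfl⟩, hzx, hzy⟩)
    · exact ⟨x, clusterOf_insert_of_reach_left hxy .refl⟩
    · rw [clusterOf_eq_iff] at hzx hzy
      exact ⟨z, clusterOf_insert_of_not_reach hxy hzx hzy⟩

variable (hnr : ¬ Relation.ReflTransGen (Adj E) x y)
include hnr

lemma disjoint_clusterOf : Disjoint (clusterOf E x) (clusterOf E y) :=
  disjoint_left.2 fun _ hx hy =>
    hnr ((mem_clusterOf.1 hx).trans (reach_symm (mem_clusterOf.1 hy)))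

lemma union_clusterOf_notMem_image :
    clusterOf E x ∪ clusterOf E y ∉ univ.image (clusterOf E) := by
  simp only [mem_image, mem_univ, true_and, not_exists]
  intro z hz
  have hx : x ∈ clusterOf E z := hz ▸ mem_union_left _ (mem_clusterOf.2 .refl)
  have hy : y ∈ clusterOf E z := hz ▸ mem_union_right _ (mem_clusterOf.2 .refl)
  exact hnr ((reach_symm (mem_clusterOf.1 hx)).trans (mem_clusterOf.1 hy))

end Clusters

section ClusterWeight

variable {d q : ℕ} {ω : Finset (Pt d)} (α : Fin q → ℝ) (c₁ : Fin q) (B : Finset (Pt d))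

def componentWeight (C : Finset (V ω)) : ℝ :=
  if ∀ x ∈ C, x.1 ∉ B then ∑ i, α i ^ C.card else α c₁ ^ C.card

def clusterWeight (E : Finset (Finset (V ω))) : ℝ :=
  α c₁ ^ (infCluster B E).card * ∏ C ∈ finiteClusters B E, ∑ i, α i ^ C.card

lemma card_infCluster (E : Finset (Finset (V ω))) :
    (infCluster B E).card =
      ∑ C ∈ (univ.image (clusterOf E)).filter (fun C => ¬ ∀ x ∈ C, x.1 ∉ B), C.card := by
  rw [card_eq_sum_card_fiberwise (f := clusterOf E)]
  · refine sum_congr rfl fun C hC => ?_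
    obtain ⟨hCE, hCB⟩ := mem_filter.1 hC
    obtain ⟨z, -, rfl⟩ := mem_image.1 hCE
    congr 1
    ext a
    rw [mem_filter, mem_infCluster_iff, clusterOf_eq_iff, mem_clusterOf]
    refine ⟨fun h => reach_symm h.2, fun h => ?_⟩
    rw [clusterOf_eq_iff.2 (reach_symm h)]
    exact ⟨hCB, reach_symm h⟩
  · exact fun a ha => mem_filter.2 ⟨mem_image_of_mem _ (mem_univ a), mem_infCluster_iff.1 ha⟩

lemma clusterWeight_eq_prod_componentWeight (E : Finset (Finset (V ω))) :
    clusterWeight α c₁ B E = ∏ C ∈ univ.image (clusterOf E), componentWeight α c₁ B C := by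
  unfold componentWeight
  rw [clusterWeight, card_infCluster, ← prod_pow_eq_pow_sum, prod_ite, mul_comm]
  rfl

variable {α c₁}

lemma clusterWeight_pos (hα : ∀ i, 0 < α i) (E : Finset (Finset (V ω))) :
    0 < clusterWeight α c₁ B E :=
  mul_pos (pow_pos (hα c₁) _)
    (prod_pos fun _ _ => sum_pos (fun i _ => pow_pos (hα i) _) ⟨c₁, mem_univ c₁⟩)

variable (hα : ∀ i, 0 ≤ α i) (hαmax : ∀ i, α i ≤ α c₁)
include hα

lemma pow_card_le_componentWeight (C : Finset (V ω)) :
    α c₁ ^ C.card ≤ componentWeight α c₁ B C := by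
  unfold componentWeight
  split_ifs
  · exact single_le_sum (fun i _ => pow_nonneg (hα i) _) (mem_univ c₁)
  · rfl

lemma componentWeight_nonneg (C : Finset (V ω)) : 0 ≤ componentWeight α c₁ B C :=
  (pow_nonneg (hα c₁) _).trans (pow_card_le_componentWeight B hα C)

lemma clusterWeight_nonneg (E : Finset (Finset (V ω))) : 0 ≤ clusterWeight α c₁ B E := by
  rw [clusterWeight_eq_prod_componentWeight]
  exact prod_nonneg fun C _ => componentWeight_nonneg B hα C

include hαmax

lemma componentWeight_le (C : Finset (V ω)) : componentWeight α c₁ B C ≤ q * α c₁ ^ C.card := by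
  unfold componentWeight
  split_ifs
  · calc ∑ i, α i ^ C.card ≤ ∑ _i : Fin q, α c₁ ^ C.card :=
          sum_le_sum fun i _ => pow_le_pow_left₀ (hα i) (hαmax i) _
      _ = q * α c₁ ^ C.card := by simp
  · exact le_mul_of_one_le_left (pow_nonneg (hα c₁) _) (Nat.one_le_cast.2 c₁.pos)

lemma componentWeight_mul_le {C D : Finset (V ω)} (hCD : Disjoint C D) :
    componentWeight α c₁ B C * componentWeight α c₁ B D ≤
      q ^ 2 * componentWeight α c₁ B (C ∪ D) :=
  calc componentWeight α c₁ B C * componentWeight α c₁ B D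
      ≤ (q * α c₁ ^ C.card) * (q * α c₁ ^ D.card) :=
        mul_le_mul (componentWeight_le B hα hαmax C) (componentWeight_le B hα hαmax D)
          (componentWeight_nonneg B hα D) (by have := hα c₁; positivity)
    _ = q ^ 2 * α c₁ ^ (C ∪ D).card := by rw [card_union_of_disjoint hCD, pow_add]; ring
    _ ≤ q ^ 2 * componentWeight α c₁ B (C ∪ D) :=
        mul_le_mul_of_nonneg_left (pow_card_le_componentWeight B hα _) (by positivity)

lemma clusterWeight_le_sq_mul_insert {E : Finset (Finset (V ω))} {x y : V ω} (hxy : x ≠ y) :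
    clusterWeight α c₁ B E ≤ q ^ 2 * clusterWeight α c₁ B (insert {x, y} E) := by
  simp only [clusterWeight_eq_prod_componentWeight]
  by_cases hr : Relation.ReflTransGen (Adj E) x y
  · rw [clusterOf_insert_of_reach hxy hr]
    exact le_mul_of_one_le_left (prod_nonneg fun C _ => componentWeight_nonneg B hα C)
      (one_le_pow₀ (Nat.one_le_cast.2 c₁.pos))
  have hsub : {clusterOf E x, clusterOf E y} ⊆ univ.image (clusterOf E) := by
    simp [insert_subset_iff]
  rw [image_clusterOf_insert hxy,
    prod_insert fun h => union_clusterOf_notMem_image hr (mem_sdiff.1 h).1, ← prod_sdiff hsub,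
    prod_pair (mt clusterOf_eq_iff.1 hr)]
  exact (mul_le_mul_of_nonneg_left
    (componentWeight_mul_le B hα hαmax (disjoint_clusterOf hr))
    (prod_nonneg fun C _ => componentWeight_nonneg B hα C)).trans_eq (by ring)

end ClusterWeight

/-- Chosen so that its odds `p̃ / (1 - p̃)` are `(1 - c) / (Q c)`. -/
def ptilde (Q c : ℝ) : ℝ := (1 - c) / (Q * c + (1 - c))

lemma ptilde_nonneg {Q c : ℝ} (hQ : 0 ≤ Q) (hc0 : 0 ≤ c) (hc1 : c ≤ 1) : 0 ≤ ptilde Q c :=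
  div_nonneg (sub_nonneg.2 hc1) (add_nonneg (mul_nonneg hQ hc0) (sub_nonneg.2 hc1))

section Ptilde

variable {Q c : ℝ} (hQ : 0 < Q) (hc0 : 0 < c) (hc1 : c ≤ 1)
include hQ hc0 hc1

lemma ptilde_lt_one : ptilde Q c < 1 := by
  rw [ptilde, div_lt_one (by nlinarith)]
  nlinarith [mul_pos hQ hc0]

lemma ptilde_mul_le {t : ℝ} (htc : t ≤ c) : ptilde Q c * (Q * t) ≤ (1 - ptilde Q c) * (1 - t) := by
  have hD : 0 < Q * c + (1 - c) := by nlinarith [mul_pos hQ hc0]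
  rw [ptilde, one_sub_div hD.ne', div_mul_eq_mul_div, div_mul_eq_mul_div,
    div_le_div_iff_of_pos_right hD]
  nlinarith [mul_le_mul_of_nonneg_left htc hQ.le]

end Ptilde

section Edges

variable {d : ℕ} {ω : Finset (Pt d)}

lemma barWeight_eq_bernoulliWeight (r₃ p : ℝ) :
    barWeight ω r₃ p = bernoulliWeight (pairs ω) fun e => if pairDist e ≤ r₃ then p else 0 := rfl

lemma offDiag_pair {γ : Type*} [DecidableEq γ] {x y : γ} (hxy : x ≠ y) :
    ({x, y} : Finset γ).offDiag = {(x, y), (y, x)} := by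
  ext ⟨a, b⟩
  simp only [mem_offDiag, mem_insert, mem_singleton, Prod.mk.injEq]
  grind

lemma le_phiPair {φ : Pt d → ℝ} {u r₃ : ℝ} (hφu : ∀ z : Pt d, ‖z‖ ≤ r₃ → u ≤ φ z)
    {e : Finset (V ω)} (he : e ∈ pairs ω) (hd : pairDist e ≤ r₃) : u ≤ phiPair φ ω e := by
  obtain ⟨x, y, hxy, rfl⟩ := card_eq_two.1 (mem_filter.1 he).2
  have hne : ((x, y) : V ω × V ω) ≠ (y, x) := fun h => hxy (congrArg Prod.fst h)
  rw [pairDist, offDiag_pair hxy, sum_pair hne, dist_comm y.1, dist_eq_norm] at hd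
  rw [phiPair, offDiag_pair hxy, sum_pair hne]
  have hxy' := hφu (x.1 - y.1) (by linarith)
  have hyx := hφu (y.1 - x.1) (by rw [norm_sub_rev]; linarith)
  linarith

variable {φ : Pt d → ℝ}

lemma pe_nonneg (hφ : ∀ z, 0 ≤ φ z) (e : Finset (V ω)) : 0 ≤ pe φ ω e :=
  sub_nonneg.2 (Real.exp_le_one_iff.2
    (neg_nonpos.2 (div_nonneg (sum_nonneg fun _ _ => hφ _) zero_le_two)))

lemma pe_lt_one (e : Finset (V ω)) : pe φ ω e < 1 := sub_lt_self _ (Real.exp_pos _)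

lemma edgeWeight_nonneg (hφ : ∀ z, 0 ≤ φ z) {E : Finset (Finset (V ω))} (hE : E ⊆ pairs ω) :
    0 ≤ edgeWeight φ ω E :=
  bernoulliWeight_nonneg (fun e _ => pe_nonneg hφ e) (fun e _ => (pe_lt_one e).le) hE

variable {q : ℕ} {α : Fin q → ℝ} {c₁ : Fin q} {B : Finset (Pt d)}

lemma rcWeight_eq_clusterWeight_mul (E : Finset (Finset (V ω))) :
    rcWeight φ α c₁ ω B E = clusterWeight α c₁ B E * edgeWeight φ ω E := rfl

lemma rcWeight_nonneg (hφ : ∀ z, 0 ≤ φ z) (hα : ∀ i, 0 ≤ α i) {E : Finset (Finset (V ω))}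
    (hE : E ⊆ pairs ω) : 0 ≤ rcWeight φ α c₁ ω B E :=
  mul_nonneg (clusterWeight_nonneg B hα E) (edgeWeight_nonneg hφ hE)

lemma sum_rcWeight_pos (hφ : ∀ z, 0 ≤ φ z) (hα : ∀ i, 0 < α i) :
    0 < ∑ E ∈ (pairs ω).powerset, rcWeight φ α c₁ ω B E := by
  have hempty : 0 < rcWeight φ α c₁ ω B ∅ := by
    rw [rcWeight_eq_clusterWeight_mul, edgeWeight, prod_empty, one_mul, sdiff_empty]
    exact mul_pos (clusterWeight_pos B hα ∅) (prod_pos fun e _ => sub_pos.2 (pe_lt_one e))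
  exact hempty.trans_le (single_le_sum (fun E hE => rcWeight_nonneg hφ (fun i => (hα i).le)
    (mem_powerset.1 hE)) (empty_mem_powerset _))

lemma ptilde_mul_rcWeight_le (hφ : ∀ z, 0 ≤ φ z) (hα : ∀ i, 0 ≤ α i) (hαmax : ∀ i, α i ≤ α c₁)
    {u r₃ : ℝ} (hu : 0 ≤ u) (hφu : ∀ z : Pt d, ‖z‖ ≤ r₃ → u ≤ φ z)
    {E : Finset (Finset (V ω))} {e : Finset (V ω)} (hE : E ⊆ pairs ω) (he : e ∈ pairs ω)
    (heE : e ∉ E) (hd : pairDist e ≤ r₃) :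
    ptilde (q ^ 2) (Real.exp (-u)) * rcWeight φ α c₁ ω B E ≤
      (1 - ptilde (q ^ 2) (Real.exp (-u))) * rcWeight φ α c₁ ω B (insert e E) := by
  obtain ⟨x, y, hxy, rfl⟩ := card_eq_two.1 (mem_filter.1 he).2
  set p := ptilde (q ^ 2) (Real.exp (-u))
  set t := Real.exp (-phiPair φ ω {x, y})
  have hQ : (0 : ℝ) < q ^ 2 := pow_pos (Nat.cast_pos.2 c₁.pos) 2
  have hc1 : Real.exp (-u) ≤ 1 := Real.exp_le_one_iff.2 (neg_nonpos.2 hu)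
  have ht : 0 < t := Real.exp_pos _
  have htc : t ≤ Real.exp (-u) := Real.exp_le_exp.2 (neg_le_neg (le_phiPair hφu he hd))
  have hp : 0 ≤ p := ptilde_nonneg hQ.le (Real.exp_pos _).le hc1
  have hodds : p * (q ^ 2 * t) ≤ (1 - p) * (1 - t) := ptilde_mul_le hQ (Real.exp_pos _) hc1 htc
  have hedge : edgeWeight φ ω (insert {x, y} E) * t = edgeWeight φ ω E * (1 - t) := by
    have h := bernoulliWeight_insert_mul (p := pe φ ω) he heE
    rwa [pe, sub_sub_cancel] at h
  have hW := edgeWeight_nonneg hφ hE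
  have hκ := clusterWeight_le_sq_mul_insert B hα hαmax hxy (E := E)
  rw [rcWeight_eq_clusterWeight_mul, rcWeight_eq_clusterWeight_mul]
  refine le_of_mul_le_mul_right ?_ ht
  calc p * (clusterWeight α c₁ B E * edgeWeight φ ω E) * t
      ≤ p * (q ^ 2 * clusterWeight α c₁ B (insert {x, y} E) * edgeWeight φ ω E) * t :=
        mul_le_mul_of_nonneg_right
          (mul_le_mul_of_nonneg_left (mul_le_mul_of_nonneg_right hκ hW) hp) ht.le
    _ = p * (q ^ 2 * t) * (clusterWeight α c₁ B (insert {x, y} E) * edgeWeight φ ω E) := by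
        ring
    _ ≤ (1 - p) * (1 - t) * (clusterWeight α c₁ B (insert {x, y} E) * edgeWeight φ ω E) :=
        mul_le_mul_of_nonneg_right hodds (mul_nonneg (clusterWeight_nonneg B hα _) hW)
    _ = (1 - p) * (clusterWeight α c₁ B (insert {x, y} E) * edgeWeight φ ω (insert {x, y} E)) *
          t := by
        linear_combination (p - 1) * clusterWeight α c₁ B (insert {x, y} E) * hedge

end Edges

/-- If `φ ≥ u > 0` on the ball of radius `r₃` and `α₁` is maximal, then the
generalized random cluster measure `μ^α_ω` stochastically dominates the independent edge model
`μ̄_ω` with edge probability `p̃ = (1−e^{−u})/(q²e^{−u}+1−e^{−u})`: the expectation of any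
nondecreasing function of the edge set is at least as large under `μ^α_ω` as under `μ̄_ω`. -/
theorem grcm_dominates_bernoulli (d q : ℕ) (hq : 2 ≤ q)
    (ω B : Finset (Pt d)) (φ : Pt d → ℝ)
    (hφpos : ∀ z, 0 ≤ φ z)
    (α : Fin q → ℝ) (hαpos : ∀ i, 0 < α i)
    (u r₃ : ℝ) (hu : 0 < u)
    (hφu : ∀ z : Pt d, ‖z‖ ≤ r₃ → u ≤ φ z)
    (hαmax : ∀ i, α i ≤ α (⟨0, by omega⟩ : Fin q)) :
    ∀ f : Finset (Finset (V ω)) → ℝ,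
      (∀ E E' : Finset (Finset (V ω)), E ⊆ E' → f E ≤ f E') →
      (∑ E ∈ (pairs ω).powerset,
          f E * barWeight ω r₃
            ((1 - Real.exp (-u)) / ((q : ℝ) ^ 2 * Real.exp (-u) + (1 - Real.exp (-u)))) E)
        ≤ ∑ E ∈ (pairs ω).powerset,
            f E * (rcWeight φ α (⟨0, by omega⟩ : Fin q) ω B E /
              ∑ E' ∈ (pairs ω).powerset, rcWeight φ α (⟨0, by omega⟩ : Fin q) ω B E') := by
  intro f hf
  rw [barWeight_eq_bernoulliWeight, ← ptilde.eq_1]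
  have hQ : (0 : ℝ) < q ^ 2 := pow_pos (Nat.cast_pos.2 (by omega)) 2
  have hc1 : Real.exp (-u) ≤ 1 := Real.exp_le_one_iff.2 (by linarith)
  have hp0 := ptilde_nonneg hQ.le (Real.exp_pos (-u)).le hc1
  have hp1 := ptilde_lt_one hQ (Real.exp_pos (-u)) hc1
  refine sum_mul_bernoulliWeight_le (fun e _ => by split_ifs <;> linarith) (fun e _ => by split_ifs <;> linarith)
    (fun E hE => rcWeight_nonneg hφpos (fun i => (hαpos i).le) hE)
    (sum_rcWeight_pos hφpos hαpos) (fun E hE e he heE => ?_) (fun E E' => hf E E')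
  split_ifs with hd
  · exact ptilde_mul_rcWeight_le hφpos (fun i => (hαpos i).le) hαmax hu.le hφu hE he heE hd
  · simpa using rcWeight_nonneg hφpos (fun i => (hαpos i).le) (insert_subset he hE)

end ContinuumPotts
end
end

section
/- For every integer n ≥ 2 and every p ∈ (0,1), the probability that the Erdős–Rényi random graph G(n,p) is connected satisfies γ(n,p) ≥ 1 − (n−1)(1 − p²)^{n−2}. -/
open Finset
open scoped Classical

noncomputable section

/-- The set of potential edges (unordered pairs of distinct vertices) of a graph on `Fin n`. -/
def erPairs (n : ℕ) : Finset (Sym2 (Fin n)) :=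
  Finset.univ.filter fun e => ¬ e.IsDiag

namespace ERAux


variable {β : Type*} [DecidableEq β] {α : Type*} [DecidableEq α]

def nu (p : ℝ) (s F : Finset β) : ℝ := (∏ _e ∈ F, p) * ∏ _e ∈ s \ F, (1 - p)

lemma nu_nonneg {p : ℝ} (hp0 : 0 ≤ p) (hp1 : p ≤ 1) (s F : Finset β) : 0 ≤ nu p s F := by
  have : 0 ≤ 1 - p := by linarith
  exact mul_nonneg (Finset.prod_nonneg fun _ _ => hp0) (Finset.prod_nonneg fun _ _ => this)

lemma sum_nu (p : ℝ) (s : Finset β) : ∑ F ∈ s.powerset, nu p s F = 1 := by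
  have h := Finset.prod_add (fun _ : β => p) (fun _ => (1 - p)) s
  simp only [add_sub_cancel, Finset.prod_const_one] at h
  simpa [nu] using h.symm

lemma inter_union_left {s t F G : Finset β} (hst : Disjoint s t) (hF : F ⊆ s) (hG : G ⊆ t) :
    (F ∪ G) ∩ s = F := by
  ext x
  simp only [mem_inter, mem_union]
  constructor
  · rintro ⟨hx | hx, hxs⟩
    · exact hx
    · exact absurd hxs (Finset.disjoint_right.mp hst (hG hx))
  · exact fun hx => ⟨Or.inl hx, hF hx⟩

lemma nu_split (p : ℝ) {s t : Finset β} (hst : Disjoint s t) {E : Finset β} (hE : E ⊆ s ∪ t) :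
    nu p (s ∪ t) E = nu p s (E ∩ s) * nu p t (E ∩ t) := by
  have hE' : (E ∩ s) ∪ (E ∩ t) = E := by
    rw [← Finset.inter_union_distrib_left]
    exact Finset.inter_eq_left.mpr hE
  have hdisj1 : Disjoint (E ∩ s) (E ∩ t) :=
    hst.mono (Finset.inter_subset_right) (Finset.inter_subset_right)
  have hsd : (s ∪ t) \ E = (s \ (E ∩ s)) ∪ (t \ (E ∩ t)) := by
    ext x
    simp only [mem_sdiff, mem_union, mem_inter]
    tauto
  have hdisj2 : Disjoint (s \ (E ∩ s)) (t \ (E ∩ t)) :=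
    hst.mono (Finset.sdiff_subset) (Finset.sdiff_subset)
  have p1 : (∏ _e ∈ E, p) = (∏ _e ∈ E ∩ s, p) * ∏ _e ∈ E ∩ t, p := by
    rw [← Finset.prod_union hdisj1, hE']
  have p2 : (∏ _e ∈ (s ∪ t) \ E, (1 - p)) =
      (∏ _e ∈ s \ (E ∩ s), (1 - p)) * ∏ _e ∈ t \ (E ∩ t), (1 - p) := by
    rw [hsd, Finset.prod_union hdisj2]
  rw [nu, nu, nu, p1, p2]
  ring

lemma split (f g : Finset β → ℝ) {s t : Finset β} (hst : Disjoint s t) :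
    ∑ E ∈ (s ∪ t).powerset, f (E ∩ s) * g (E ∩ t)
      = (∑ F ∈ s.powerset, f F) * (∑ G ∈ t.powerset, g G) := by
  rw [Finset.sum_mul_sum, ← Finset.sum_product']
  refine Finset.sum_nbij' (fun E => (E ∩ s, E ∩ t)) (fun x => x.1 ∪ x.2) ?_ ?_ ?_ ?_ ?_
  · intro E hE
    simp only [Finset.mem_product, Finset.mem_powerset]
    exact ⟨Finset.inter_subset_right, Finset.inter_subset_right⟩
  · intro x hx
    simp only [Finset.mem_product, Finset.mem_powerset] at hx ⊢
    exact Finset.union_subset_union hx.1 hx.2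
  · intro E hE
    simp only [Finset.mem_powerset] at hE
    show (E ∩ s) ∪ (E ∩ t) = E
    rw [← Finset.inter_union_distrib_left]
    exact Finset.inter_eq_left.mpr hE
  · intro x hx
    simp only [Finset.mem_product, Finset.mem_powerset] at hx
    have h1 : (x.1 ∪ x.2) ∩ s = x.1 := inter_union_left hst hx.1 hx.2
    have h2 : (x.1 ∪ x.2) ∩ t = x.2 := by
      rw [Finset.union_comm]
      exact inter_union_left hst.symm hx.2 hx.1
    simp [h1, h2]
  · intro E hE; rfl

lemma blocks (p : ℝ) (c : α → Finset β → Prop) (b : α → Finset β) :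
    ∀ (W : Finset α), (∀ w ∈ W, ∀ w' ∈ W, w ≠ w' → Disjoint (b w) (b w')) →
    ∑ F ∈ (W.biUnion b).powerset,
        (if ∀ w ∈ W, c w (F ∩ b w) then (1:ℝ) else 0) * nu p (W.biUnion b) F
      = ∏ w ∈ W, ∑ F ∈ (b w).powerset, (if c w F then (1:ℝ) else 0) * nu p (b w) F := by
  intro W
  induction W using Finset.induction_on with
  | empty => intro _; simp [nu]
  | insert a W ha ih =>
    intro hdisj
    have hdW : ∀ w ∈ W, ∀ w' ∈ W, w ≠ w' → Disjoint (b w) (b w') := fun w hw w' hw' h =>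
      hdisj w (mem_insert_of_mem hw) w' (mem_insert_of_mem hw') h
    have haW : Disjoint (b a) (W.biUnion b) := by
      rw [Finset.disjoint_biUnion_right]
      intro w hw
      exact hdisj a (mem_insert_self a W) w (mem_insert_of_mem hw) (fun h => ha (h ▸ hw))
    rw [Finset.biUnion_insert]
    have key : ∀ E ∈ (b a ∪ W.biUnion b).powerset,
        (if ∀ w ∈ insert a W, c w (E ∩ b w) then (1:ℝ) else 0) * nu p (b a ∪ W.biUnion b) E
        = ((if c a (E ∩ b a) then (1:ℝ) else 0) * nu p (b a) (E ∩ b a)) *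
          ((if ∀ w ∈ W, c w ((E ∩ W.biUnion b) ∩ b w) then (1:ℝ) else 0) *
            nu p (W.biUnion b) (E ∩ W.biUnion b)) := by
      intro E hE
      rw [Finset.mem_powerset] at hE
      have hbw : ∀ w ∈ W, (E ∩ W.biUnion b) ∩ b w = E ∩ b w := by
        intro w hw
        rw [Finset.inter_assoc, Finset.inter_eq_right.mpr (Finset.subset_biUnion_of_mem b hw)]
      have hiff : (∀ w ∈ insert a W, c w (E ∩ b w)) ↔
          (c a (E ∩ b a) ∧ ∀ w ∈ W, c w ((E ∩ W.biUnion b) ∩ b w)) := by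
        rw [Finset.forall_mem_insert]
        constructor
        · rintro ⟨h1, h2⟩; exact ⟨h1, fun w hw => (hbw w hw) ▸ h2 w hw⟩
        · rintro ⟨h1, h2⟩; exact ⟨h1, fun w hw => (hbw w hw) ▸ h2 w hw⟩
      rw [nu_split p haW hE]
      by_cases h1 : c a (E ∩ b a) <;>
        by_cases h2 : ∀ w ∈ W, c w ((E ∩ W.biUnion b) ∩ b w)
      · rw [if_pos (hiff.mpr ⟨h1, h2⟩), if_pos h1, if_pos h2]; ring
      · rw [if_neg (fun h => h2 (hiff.mp h).2), if_pos h1, if_neg h2]; ring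
      · rw [if_neg (fun h => h1 (hiff.mp h).1), if_neg h1]; ring
      · rw [if_neg (fun h => h1 (hiff.mp h).1), if_neg h1]; ring
    rw [Finset.sum_congr rfl key,
        split (fun F => (if c a F then (1:ℝ) else 0) * nu p (b a) F)
          (fun G => (if ∀ w ∈ W, c w (G ∩ b w) then (1:ℝ) else 0) * nu p (W.biUnion b) G) haW,
        ih hdW, Finset.prod_insert ha]

lemma pair_sum (p : ℝ) {e1 e2 : β} (h : e1 ≠ e2) :
    ∑ F ∈ ({e1, e2} : Finset β).powerset,
        (if ¬(e1 ∈ F ∧ e2 ∈ F) then (1:ℝ) else 0) * nu p {e1, e2} F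
      = 1 - p ^ 2 := by
  have step : ∀ F ∈ ({e1, e2} : Finset β).powerset,
      (if ¬(e1 ∈ F ∧ e2 ∈ F) then (1:ℝ) else 0) * nu p {e1, e2} F
      = nu p {e1, e2} F - (if F = {e1, e2} then nu p {e1, e2} F else 0) := by
    intro F hF
    rw [Finset.mem_powerset] at hF
    have hiff : (e1 ∈ F ∧ e2 ∈ F) ↔ F = {e1, e2} := by
      constructor
      · intro ⟨h1, h2⟩
        exact Finset.Subset.antisymm hF (Finset.insert_subset h1 (by simpa using h2))
      · rintro rfl; simp
    by_cases hc : F = {e1, e2} <;> simp [hiff, hc]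
  rw [Finset.sum_congr rfl step, Finset.sum_sub_distrib, sum_nu,
      Finset.sum_ite_eq' _ ({e1, e2} : Finset β) (nu p {e1, e2})]
  have : nu p {e1, e2} {e1, e2} = p ^ 2 := by
    rw [nu]
    simp [Finset.prod_const, Finset.card_pair h, sq]
  simp [this]



def erCond (n : ℕ) (v0 v : Fin n) (E : Finset (Sym2 (Fin n))) : Prop :=
  ∀ w : Fin n, w ≠ v0 → w ≠ v → ¬(s(v0, w) ∈ E ∧ s(w, v) ∈ E)

lemma cover_lemma {n : ℕ} (v0 : Fin n) (E : Finset (Sym2 (Fin n)))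
    (hE : ¬ (SimpleGraph.fromEdgeSet (↑E : Set (Sym2 (Fin n)))).Connected) :
    ∃ v, v ≠ v0 ∧ erCond n v0 v E := by
  set G := SimpleGraph.fromEdgeSet (↑E : Set (Sym2 (Fin n))) with hG
  have hne : Nonempty (Fin n) := ⟨v0⟩
  rw [SimpleGraph.connected_iff] at hE
  push_neg at hE
  have hpre : ¬ G.Preconnected := fun h => (hE h).elim v0
  rw [SimpleGraph.Preconnected] at hpre
  push_neg at hpre
  obtain ⟨u, v, huv⟩ := hpre
  have main : ∀ x : Fin n, ¬ G.Reachable v0 x → x ≠ v0 ∧ erCond n v0 x E := by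
    intro x hx
    refine ⟨fun h => hx (by rw [h]), ?_⟩
    intro w hw0 hwx ⟨h1, h2⟩
    have hadj1 : G.Adj v0 w := by
      rw [hG, SimpleGraph.fromEdgeSet_adj]
      exact ⟨Finset.mem_coe.mpr h1, Ne.symm hw0⟩
    have hadj2 : G.Adj w x := by
      rw [hG, SimpleGraph.fromEdgeSet_adj]
      exact ⟨Finset.mem_coe.mpr h2, hwx⟩
    exact hx (hadj1.reachable.trans hadj2.reachable)
  have hor : ¬ G.Reachable v0 u ∨ ¬ G.Reachable v0 v := by
    by_contra h
    push_neg at h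
    exact huv (h.1.symm.trans h.2)
  obtain hx | hx := hor
  · exact ⟨u, main u hx⟩
  · exact ⟨v, main v hx⟩

lemma event_prob {n : ℕ} (p : ℝ) (v0 v : Fin n) (hv : v ≠ v0) :
    ∑ E ∈ (erPairs n).powerset,
        (if erCond n v0 v E then (1:ℝ) else 0) * nu p (erPairs n) E
      = (1 - p ^ 2) ^ (n - 2) := by
  classical
  have hv0v : v0 ≠ v := Ne.symm hv
  set W : Finset (Fin n) := Finset.univ \ {v0, v} with hWdef
  set b : Fin n → Finset (Sym2 (Fin n)) := fun w => {s(v0, w), s(w, v)} with hbdef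
  set B := W.biUnion b with hBdef
  have hmemW : ∀ w : Fin n, w ∈ W ↔ (w ≠ v0 ∧ w ≠ v) := by
    intro w; simp [hWdef]
  have hBpairs : B ⊆ erPairs n := by
    intro e he
    simp only [hBdef, Finset.mem_biUnion] at he
    obtain ⟨w, hw, he⟩ := he
    rw [hmemW] at hw
    simp only [erPairs, Finset.mem_filter, Finset.mem_univ, true_and]
    simp only [hbdef, Finset.mem_insert, Finset.mem_singleton] at he
    rcases he with rfl | rfl
    · rw [Sym2.isDiag_iff_proj_eq]
      exact fun h => hw.1 h.symm
    · rw [Sym2.isDiag_iff_proj_eq]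
      exact fun h => hw.2 h
  have hbne : ∀ w ∈ W, s(v0, w) ≠ s(w, v) := by
    intro w hw h
    rw [hmemW] at hw
    rw [Sym2.eq_iff] at h
    rcases h with ⟨h1, h2⟩ | ⟨h1, h2⟩
    · exact hw.1 h1.symm
    · exact hv0v h1
  have hbd : ∀ w ∈ W, ∀ w' ∈ W, w ≠ w' → Disjoint (b w) (b w') := by
    intro w hw w' hw' hne
    rw [hmemW] at hw hw'
    obtain ⟨hw1, hw2⟩ := hw
    obtain ⟨hw1', hw2'⟩ := hw'
    rw [Finset.disjoint_left]
    intro e he he'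
    simp only [hbdef, Finset.mem_insert, Finset.mem_singleton] at he he'
    rcases he with rfl | rfl <;> rcases he' with h | h <;> rw [Sym2.eq_iff] at h <;>
      rcases h with ⟨h1, h2⟩ | ⟨h1, h2⟩
    · exact hne h2
    · exact hw1 h2
    · exact hw2 h2
    · exact hv0v h1
    · exact hw1 h1
    · exact hne h1
    · exact hne h1
    · exact hw2 h1
  have hbsub : ∀ w ∈ W, b w ⊆ B := fun w hw => Finset.subset_biUnion_of_mem b hw
  set R := erPairs n \ B with hRdef
  have hdisjBR : Disjoint B R := Finset.disjoint_sdiff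
  have hunion : erPairs n = B ∪ R := (Finset.union_sdiff_of_subset hBpairs).symm
  set c : Fin n → Finset (Sym2 (Fin n)) → Prop :=
    fun w F => ¬(s(v0, w) ∈ F ∧ s(w, v) ∈ F) with hcdef
  rw [hunion]
  have step1 : ∀ E ∈ (B ∪ R).powerset,
      (if erCond n v0 v E then (1:ℝ) else 0) * nu p (B ∪ R) E
      = ((if ∀ w ∈ W, c w (E ∩ B ∩ b w) then (1:ℝ) else 0) * nu p B (E ∩ B)) *
          (nu p R (E ∩ R)) := by
    intro E hE
    rw [Finset.mem_powerset] at hE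
    have hcongr : (erCond n v0 v E) ↔ (∀ w ∈ W, c w (E ∩ B ∩ b w)) := by
      constructor
      · intro h w hw
        have hw' := (hmemW w).mp hw
        intro ⟨h1, h2⟩
        exact h w hw'.1 hw'.2 ⟨(Finset.mem_inter.mp ((Finset.mem_inter.mp h1).1)).1,
          (Finset.mem_inter.mp ((Finset.mem_inter.mp h2).1)).1⟩
      · intro h w hw1 hw2
        have hw : w ∈ W := (hmemW w).mpr ⟨hw1, hw2⟩
        intro ⟨h1, h2⟩
        refine h w hw ⟨?_, ?_⟩
        · exact Finset.mem_inter.mpr ⟨Finset.mem_inter.mpr ⟨h1, hbsub w hw (by simp [hbdef])⟩,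
            by simp [hbdef]⟩
        · exact Finset.mem_inter.mpr ⟨Finset.mem_inter.mpr ⟨h2, hbsub w hw (by simp [hbdef])⟩,
            by simp [hbdef]⟩
    rw [nu_split p hdisjBR hE]
    simp only [hcongr]
    ring
  rw [Finset.sum_congr rfl step1,
    split (fun F => (if ∀ w ∈ W, c w (F ∩ b w) then (1:ℝ) else 0) * nu p B F)
      (fun G => nu p R G) hdisjBR,
    sum_nu, mul_one, hBdef]
  have hblock : ∀ w ∈ W,
      (∑ F ∈ (b w).powerset, (if c w F then (1:ℝ) else 0) * nu p (b w) F) = 1 - p ^ 2 := by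
    intro w hw
    exact pair_sum p (hbne w hw)
  have hcard : W.card = n - 2 := by
    rw [hWdef, Finset.card_sdiff_of_subset (Finset.subset_univ _), Finset.card_univ, Fintype.card_fin,
      Finset.card_pair hv0v]
  have hb4 : ∏ w ∈ W, ∑ F ∈ (b w).powerset, (if c w F then (1:ℝ) else 0) * nu p (b w) F
      = (1 - p ^ 2) ^ (n - 2) := by
    rw [← hcard, ← Finset.prod_const]
    exact Finset.prod_congr rfl hblock
  refine Eq.trans ?_ hb4
  convert blocks p c b W hbd using 2 <;> congr <;> funext F <;> congr


end ERAux

/-- The probability that the Erdős–Rényi random graph `G(n,p)` is connected: the sum, over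
all edge sets `E`, of the probability `p^{|E|}(1-p)^{(n(n-1)/2)-|E|}` that exactly the edges
of `E` are present, restricted to connected graphs. -/
def erGamma (n : ℕ) (p : ℝ) : ℝ :=
  ∑ E ∈ (erPairs n).powerset,
    if (SimpleGraph.fromEdgeSet (↑E : Set (Sym2 (Fin n)))).Connected then
      p ^ E.card * (1 - p) ^ ((erPairs n).card - E.card)
    else 0

/-- For every `n ≥ 2` and `p ∈ (0,1)`, the connectivity probability of
`G(n,p)` satisfies `γ(n,p) ≥ 1 − (n−1)(1−p²)^{n−2}`. -/
theorem erGamma_ge (n : ℕ) (hn : 2 ≤ n) (p : ℝ) (hp0 : 0 < p) (hp1 : p < 1) :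
    1 - ((n : ℝ) - 1) * (1 - p ^ 2) ^ (n - 2) ≤ erGamma n p := by
  classical
  have hq0 : (0:ℝ) ≤ p := le_of_lt hp0
  have hq1 : p ≤ 1 := le_of_lt hp1
  have hμ0 : ∀ F, 0 ≤ ERAux.nu p (erPairs n) F := ERAux.nu_nonneg hq0 hq1 (erPairs n)
  have hn0 : 0 < n := by omega
  let v0 : Fin n := ⟨0, hn0⟩
  have hgamma : erGamma n p = ∑ E ∈ (erPairs n).powerset,
      (if (SimpleGraph.fromEdgeSet (↑E : Set (Sym2 (Fin n)))).Connected then (1:ℝ) else 0)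
        * ERAux.nu p (erPairs n) E := by
    unfold erGamma
    refine Finset.sum_congr rfl fun E hE => ?_
    rw [Finset.mem_powerset] at hE
    have h1 : p ^ E.card = ∏ _e ∈ E, p := (Finset.prod_const p).symm
    have h2 : (1 - p) ^ ((erPairs n).card - E.card) = ∏ _e ∈ erPairs n \ E, (1 - p) := by
      rw [Finset.prod_const, Finset.card_sdiff_of_subset hE]
    by_cases hc : (SimpleGraph.fromEdgeSet (↑E : Set (Sym2 (Fin n)))).Connected
    · rw [if_pos hc, if_pos hc, one_mul, ERAux.nu, h1, h2]
    · rw [if_neg hc, if_neg hc, zero_mul]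
  have htotal : ∑ E ∈ (erPairs n).powerset, ERAux.nu p (erPairs n) E = 1 :=
    ERAux.sum_nu p (erPairs n)
  -- the "disconnected" mass
  set D : ℝ := ∑ E ∈ (erPairs n).powerset,
      (if ¬ (SimpleGraph.fromEdgeSet (↑E : Set (Sym2 (Fin n)))).Connected then (1:ℝ) else 0)
        * ERAux.nu p (erPairs n) E with hD
  have hgamma2 : erGamma n p = 1 - D := by
    have key : ∀ E ∈ (erPairs n).powerset,
        (if (SimpleGraph.fromEdgeSet (↑E : Set (Sym2 (Fin n)))).Connected then (1:ℝ) else 0)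
          * ERAux.nu p (erPairs n) E
        = ERAux.nu p (erPairs n) E -
          (if ¬ (SimpleGraph.fromEdgeSet (↑E : Set (Sym2 (Fin n)))).Connected then (1:ℝ) else 0)
            * ERAux.nu p (erPairs n) E := by
      intro E _
      by_cases hc : (SimpleGraph.fromEdgeSet (↑E : Set (Sym2 (Fin n)))).Connected
      · rw [if_pos hc, if_neg (not_not_intro hc)]; ring
      · rw [if_neg hc, if_pos hc]; ring
    rw [hgamma, Finset.sum_congr rfl key, Finset.sum_sub_distrib, htotal, hD]
  have hub : D ≤ ∑ E ∈ (erPairs n).powerset, ∑ v ∈ Finset.univ.erase v0,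
      (if ERAux.erCond n v0 v E then (1:ℝ) else 0) * ERAux.nu p (erPairs n) E := by
    rw [hD]
    refine Finset.sum_le_sum fun E hE => ?_
    have hterm0 : ∀ v ∈ Finset.univ.erase v0,
        (0:ℝ) ≤ (if ERAux.erCond n v0 v E then (1:ℝ) else 0) * ERAux.nu p (erPairs n) E :=
      fun v _ => mul_nonneg (by split <;> norm_num) (hμ0 E)
    by_cases hc : (SimpleGraph.fromEdgeSet (↑E : Set (Sym2 (Fin n)))).Connected
    · rw [if_neg (not_not_intro hc), zero_mul]
      exact Finset.sum_nonneg hterm0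
    · rw [if_pos hc, one_mul]
      obtain ⟨v, hvne, hAv⟩ := ERAux.cover_lemma v0 E hc
      have hvmem : v ∈ Finset.univ.erase v0 := Finset.mem_erase.mpr ⟨hvne, Finset.mem_univ v⟩
      calc ERAux.nu p (erPairs n) E
          = (if ERAux.erCond n v0 v E then (1:ℝ) else 0) * ERAux.nu p (erPairs n) E := by
            rw [if_pos hAv, one_mul]
        _ ≤ _ := Finset.single_le_sum hterm0 hvmem
  rw [Finset.sum_comm] at hub
  have hinner : ∀ v ∈ Finset.univ.erase v0,
      ∑ E ∈ (erPairs n).powerset,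
        (if ERAux.erCond n v0 v E then (1:ℝ) else 0) * ERAux.nu p (erPairs n) E
      = (1 - p ^ 2) ^ (n - 2) := by
    intro v hv
    exact ERAux.event_prob p v0 v (Finset.mem_erase.mp hv).1
  rw [Finset.sum_congr rfl hinner, Finset.sum_const, Finset.card_erase_of_mem (Finset.mem_univ v0),
    Finset.card_univ, Fintype.card_fin, nsmul_eq_mul] at hub
  have hcast : ((n - 1 : ℕ) : ℝ) = (n : ℝ) - 1 := by
    have : (1:ℕ) ≤ n := by omega
    push_cast [Nat.cast_sub this]
    ring
  rw [hcast] at hub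
  rw [hgamma2]
  linarith

end
end
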